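/- Let d ≥ 2, let x, p ∈ ℝ^d with x(d) ≤ p(d), and let r ≥ 0. If the open upward cone C(p) := {q ∈ ℝ^d : q(d) − p(d) > ‖q̄ − p̄‖₁} (where q̄ denotes the vector of the first d−1 coordinates; this is the π/2 angular cone at p when d = 2) intersects the upper half-ball B⁺(x, r) := {y ∈ ℝ^d : ‖y − x‖₁ ≤ r, y(d) ≥ x(d)}, then ‖p − x‖₁ < r; in particular p lies in the interior of the ℓ¹ ball of radius r around x. (This is the deterministic geometric content of the lemma asserting that the π/2 cones centred at the current points of the exploration process are disjoint from the history region.) -/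
import Mathlib


namespace DSF

noncomputable section

/-- The index of the last (`d`-th) coordinate. -/
def lastIdx (d : ℕ) [NeZero d] : Fin d :=
  ⟨d - 1, Nat.sub_lt (Nat.pos_of_ne_zero (NeZero.ne d)) Nat.one_pos⟩

/-- ℓ¹ distance on ℝ^d. -/
def dist1 {d : ℕ} (x y : Fin d → ℝ) : ℝ := ∑ i, |x i - y i|

/-- ℓ¹ distance between the projections on the first `d-1` coordinates. -/
def dist1bar {d : ℕ} [NeZero d] (x y : Fin d → ℝ) : ℝ :=
  ∑ i ∈ Finset.univ.erase (lastIdx d), |x i - y i|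

/-- The open upward cone `C(p) = {q : q(d) − p(d) > ‖q̄ − p̄‖₁}`. -/
def cone {d : ℕ} [NeZero d] (p : Fin d → ℝ) : Set (Fin d → ℝ) :=
  {q | dist1bar q p < q (lastIdx d) - p (lastIdx d)}

/-- The upper half ℓ¹ ball `B⁺(x,r)`. -/
def Bplus {d : ℕ} [NeZero d] (x : Fin d → ℝ) (r : ℝ) : Set (Fin d → ℝ) :=
  {y | dist1 x y ≤ r ∧ x (lastIdx d) ≤ y (lastIdx d)}

/-- geometric content of Lemma 4.1: if the open upward cone at `p`, where
`p(d) ≥ x(d)`, meets the upper half ℓ¹ ball `B⁺(x,r)`, then `‖p − x‖₁ < r`. -/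
theorem cone_meets_upper_ball_implies_center_inside
    {d : ℕ} [NeZero d] (hd : 2 ≤ d)
    (x p : Fin d → ℝ) (r : ℝ) (hr : 0 ≤ r)
    (hxp : x (lastIdx d) ≤ p (lastIdx d))
    (hmeet : (cone p ∩ Bplus x r).Nonempty) :
    dist1 p x < r := by
  obtain ⟨q, hq1, hq2, hq3⟩ := hmeet
  set L := lastIdx d
  have h1 : dist1 p x = (∑ i ∈ Finset.univ.erase L, |p i - x i|) + |p L - x L| :=
    (Finset.sum_erase_add _ _ (Finset.mem_univ L)).symm
  have h2 : dist1 x q = (∑ i ∈ Finset.univ.erase L, |x i - q i|) + |x L - q L| :=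
    (Finset.sum_erase_add _ _ (Finset.mem_univ L)).symm
  have hb : ∑ i ∈ Finset.univ.erase L, |p i - x i| ≤
      dist1bar q p + ∑ i ∈ Finset.univ.erase L, |x i - q i| := by
    rw [dist1bar, ← Finset.sum_add_distrib]
    refine Finset.sum_le_sum fun i _ => ?_
    calc |p i - x i| ≤ |p i - q i| + |q i - x i| := abs_sub_le _ _ _
      _ = |q i - p i| + |x i - q i| := by rw [abs_sub_comm (q i) (x i), abs_sub_comm (p i) (q i)]
  have hcone : dist1bar q p < q L - p L := hq1
  have hPL : |p L - x L| = p L - x L := abs_of_nonneg (by linarith)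
  have hQL : q L - x L ≤ |x L - q L| := by
    rw [abs_sub_comm]; exact le_abs_self _
  linarith [hq2]

end

end DSF
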